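/- arXiv:2310.00279 — 7 statements merged into one kernel-verified Lean document; each statement's English description precedes it below -/
import Mathlib

section
/- If the nullhomotopy structure Θ on a category ℬ is induced by the counit ε of an idempotent comonad (T, ε, δ) on ℬ (that is, Θ(g : B → C) = { φ : B → T C | φ · ε_C = g }), then the reduced interchange law holds in (ℬ, Θ). -/
open CategoryTheory Limits

universe v u v' u'

/-- A structure of nullhomotopies on a category, with nullhomotopies on `g : X ⟶ Y`
given as a subset of an ambient type `E X Y`. -/
structure NullStruct (B : Type u) [Category.{v} B] where
  E : B → B → Type v
  theta : ∀ {X Y : B}, (X ⟶ Y) → Set (E X Y)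
  comp : ∀ {A X Y D : B}, (A ⟶ X) → (Y ⟶ D) → E X Y → E A D
  comp_mem : ∀ {A X Y D : B} (f : A ⟶ X) {g : X ⟶ Y} (h : Y ⟶ D) {φ : E X Y},
    φ ∈ theta g → comp f h φ ∈ theta (f ≫ g ≫ h)
  comp_comp : ∀ {A' A X Y D D' : B} (f' : A' ⟶ A) (f : A ⟶ X) {g : X ⟶ Y}
    (h : Y ⟶ D) (h' : D ⟶ D') {φ : E X Y}, φ ∈ theta g →
    comp (f' ≫ f) (h ≫ h') φ = comp f' h' (comp f h φ)
  id_comp : ∀ {X Y : B} {g : X ⟶ Y} {φ : E X Y}, φ ∈ theta g →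
    comp (𝟙 X) (𝟙 Y) φ = φ

/-- The nullhomotopy structure `Θ_∅` on a category with an initial object. -/
noncomputable def thetaEmpty (A : Type u) [Category.{v} A] [HasInitial A] : NullStruct A where
  E X _ := X ⟶ ⊥_ A
  theta {X Y} g := {φ | φ ≫ initial.to Y = g}
  comp f _ φ := f ≫ φ
  comp_mem := by
    intro W X Y D f g h φ hφ
    simp only [Set.mem_setOf_eq] at hφ ⊢
    rw [Category.assoc, ← hφ]
    congr 1
    rw [Category.assoc]
    congr 1
    apply Subsingleton.elim
  comp_comp := by intros; simp
  id_comp := by intros; simp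

/-- The diagonal nullhomotopy structure `Θ_Δ` on the arrow category. -/
def thetaDelta (A : Type u) [Category.{v} A] : NullStruct (Arrow A) where
  E X Y := X.right ⟶ Y.left
  theta {X Y} g := {φ | X.hom ≫ φ = g.left ∧ φ ≫ Y.hom = g.right}
  comp f h φ := f.right ≫ φ ≫ h.left
  comp_mem := by
    intro W X Y D f g h φ hφ
    obtain ⟨h1, h2⟩ := hφ
    constructor
    · show W.hom ≫ f.right ≫ φ ≫ h.left = (f ≫ g ≫ h).left
      rw [← Arrow.w_assoc f, reassoc_of% h1]
      rfl
    · show (f.right ≫ φ ≫ h.left) ≫ _ = (f ≫ g ≫ h).right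
      simp only [Category.assoc]
      rw [Arrow.w h, reassoc_of% h2]
      rfl
  comp_comp := by intros; simp
  id_comp := by intros; simp

/-- Reduced interchange. -/
def ReducedInterchange {B : Type u} [Category.{v} B] (N : NullStruct B) : Prop :=
  ∀ {X Y Z : B} (f : X ⟶ Y) (g : Y ⟶ Z) (α : N.E X Y) (β : N.E Y Z),
    α ∈ N.theta f → β ∈ N.theta g → N.comp (𝟙 X) g α = N.comp f (𝟙 Z) β

/-- A `Θ`-cokernel. -/
structure IsThetaCokernel {B : Type u} [Category.{v} B] (N : NullStruct B)
    {X Y Q : B} (g : X ⟶ Y) (c : Y ⟶ Q) (γ : N.E X Q) : Prop where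
  mem : γ ∈ N.theta (g ≫ c)
  factor : ∀ {D : B} (h : Y ⟶ D) (φ : N.E X D), φ ∈ N.theta (g ≫ h) →
    ∃! h' : Q ⟶ D, c ≫ h' = h ∧ N.comp (𝟙 X) h' γ = φ

/-- A strong `Θ`-cokernel. -/
structure IsStrongThetaCokernel {B : Type u} [Category.{v} B] (N : NullStruct B)
    {X Y Q : B} (g : X ⟶ Y) (c : Y ⟶ Q) (γ : N.E X Q)
    extends IsThetaCokernel N g c γ : Prop where
  strong : ∀ {D : B} (h : Q ⟶ D) (φ : N.E Y D), φ ∈ N.theta (c ≫ h) →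
    N.comp g (𝟙 D) φ = N.comp (𝟙 X) h γ →
    ∃! φ' : N.E Q D, φ' ∈ N.theta h ∧ N.comp c (𝟙 D) φ' = φ

/-- A pushout square which is strong with respect to nullhomotopies. -/
def PushoutThetaStrong {B : Type u} [Category.{v} B] (N : NullStruct B)
    {Z X Y P : B} (f : Z ⟶ X) (g : Z ⟶ Y) (h : X ⟶ P) (i : Y ⟶ P) : Prop :=
  ∀ {D : B} (x : X ⟶ D) (y : Y ⟶ D) (z : P ⟶ D), h ≫ z = x → i ≫ z = y →
    ∀ (φ : N.E X D) (ψ : N.E Y D), φ ∈ N.theta x → ψ ∈ N.theta y →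
      N.comp f (𝟙 D) φ = N.comp g (𝟙 D) ψ →
      ∃! χ : N.E P D, χ ∈ N.theta z ∧ N.comp h (𝟙 D) χ = φ ∧ N.comp i (𝟙 D) χ = ψ

/-- A `Θ`-strong initial object. -/
def InitialThetaStrong {B : Type u} [Category.{v} B] (N : NullStruct B) [HasInitial B] : Prop :=
  ∀ X : B, ∃! γ : N.E (⊥_ B) X, γ ∈ N.theta (initial.to X)

/-- The embedding `Γ : 𝒜 → Arr(𝒜)` sending `X` to `∅ → X`. -/
@[simps]
noncomputable def Gam (A : Type u) [Category.{v} A] [HasInitial A] : A ⥤ Arrow A where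
  obj X := Arrow.mk (initial.to X)
  map {X Y} g := Arrow.homMk (u := 𝟙 (⊥_ A)) (v := g) (by apply Limits.initial.hom_ext)
  map_id X := by apply CommaMorphism.ext <;> simp
  map_comp f g := by apply CommaMorphism.ext <;> simp

namespace CategoryTheory.Comonad

variable {C : Type u} [Category.{v} C]

lemma map_comp_counit_app_eq_counit_app_comp (T : Comonad C) [IsIso T.δ] {X Y : C}
    (β : X ⟶ T.obj Y) : T.map (β ≫ T.ε.app Y) = T.ε.app X ≫ β := by
  rw [T.map_comp, T.map_counit_app, T.counit_naturality]

end CategoryTheory.Comonad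

/-- if the nullhomotopy structure is induced by the counit of an
idempotent comonad `T`, the reduced interchange law holds: for `α ∈ Θ(f)` and
`β ∈ Θ(g)` one has `α ∘ g = f ∘ β`. -/
theorem stmt4 {C : Type u} [Category.{v} C] (T : Comonad C) (hT : IsIso T.δ) :
    ∀ {A X Y : C} (f : A ⟶ X) (g : X ⟶ Y) (α : A ⟶ T.toFunctor.obj X)
      (β : X ⟶ T.toFunctor.obj Y),
      α ≫ T.ε.app X = f → β ≫ T.ε.app Y = g →
      𝟙 A ≫ α ≫ T.toFunctor.map g = f ≫ β ≫ T.toFunctor.map (𝟙 Y) := by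
  rintro A X Y f g α β rfl rfl
  rw [T.map_comp_counit_app_eq_counit_app_comp β]
  simp
end

section
/- Cancellation for strong Θ-cokernels on nullhomotopies: assume (ℬ, Θ) satisfies the reduced interchange and (𝒞(f), c_f, γ_f) is a strong Θ-cokernel of f : A → B. If g : 𝒞(f) → C and φ, ψ ∈ Θ(g) satisfy c_f ∘ φ = c_f ∘ ψ, then φ = ψ. -/
open CategoryTheory Limits

universe v u v' u'

namespace NullStruct

variable {C : Type u} [Category.{v} C] (N : NullStruct C)

theorem comp_id_mem {X Y D : C} (c : X ⟶ Y) {g : Y ⟶ D} {φ : N.E Y D}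
    (hφ : φ ∈ N.theta g) : N.comp c (𝟙 D) φ ∈ N.theta (c ≫ g) := by
  simpa using N.comp_mem c (𝟙 D) hφ

theorem comp_id_comp_id {A X Y D : C} (f : A ⟶ X) (c : X ⟶ Y) {g : Y ⟶ D} {φ : N.E Y D}
    (hφ : φ ∈ N.theta g) : N.comp f (𝟙 D) (N.comp c (𝟙 D) φ) = N.comp (f ≫ c) (𝟙 D) φ := by
  simpa using (N.comp_comp f c (𝟙 D) (𝟙 D) hφ).symm

end NullStruct

theorem ReducedInterchange.comp_comp_id_eq {C : Type u} [Category.{v} C] {N : NullStruct C}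
    (hri : ReducedInterchange N) {A B Q D : C} {f : A ⟶ B} {c : B ⟶ Q} {γ : N.E A Q}
    (hγ : γ ∈ N.theta (f ≫ c)) {g : Q ⟶ D} {φ : N.E Q D} (hφ : φ ∈ N.theta g) :
    N.comp f (𝟙 D) (N.comp c (𝟙 D) φ) = N.comp (𝟙 A) g γ := by
  rw [N.comp_id_comp_id f c hφ, hri (f ≫ c) g γ φ hγ hφ]

/-- cancellation for strong `Θ`-cokernels on nullhomotopies, under
the reduced interchange. -/
theorem stmt10 {C : Type u} [Category.{v} C] (N : NullStruct C)
    (hri : ReducedInterchange N) {A B Q D : C}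
    (f : A ⟶ B) (c : B ⟶ Q) (γ : N.E A Q) (hc : IsStrongThetaCokernel N f c γ)
    (g : Q ⟶ D) (φ ψ : N.E Q D) (hφ : φ ∈ N.theta g) (hψ : ψ ∈ N.theta g)
    (e : N.comp c (𝟙 D) φ = N.comp c (𝟙 D) ψ) : φ = ψ := by
  obtain ⟨_, -, huniq⟩ :=
    hc.strong g _ (N.comp_id_mem c hφ) (hri.comp_comp_id_eq hc.mem hφ)
  rw [huniq φ ⟨hφ, rfl⟩, huniq ψ ⟨hψ, e.symm⟩]
end

section
/- If 𝒜 has an initial object ∅, then for any arrow a : A → A₀ in 𝒜, the object (A, a, A₀) of Arr(𝒜) together with the arrow (∅_A, id_{A₀}) : Γ A₀ → (A, a, A₀) and the diagonal id_A ∈ Θ_Δ(Γ a · (∅_A, id_{A₀})) is a Θ_Δ-cokernel of Γ a : Γ A → Γ A₀ in (Arr(𝒜), Θ_Δ). -/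
open CategoryTheory Limits

universe v u v' u'

/-- every object `(A, a, A₀)` of `Arr(𝒜)` is the `Θ_Δ`-cokernel of
`Γ a : Γ A ⟶ Γ A₀`, via the arrow `(∅_A, id_{A₀})` and the diagonal `id_A`. -/
theorem stmt11 (A : Type u) [Category.{v} A] [HasInitial A] {X X₀ : A} (a : X ⟶ X₀) :
    IsThetaCokernel (thetaDelta A) ((Gam A).map a)
      (Arrow.homMk (f := (Gam A).obj X₀) (g := Arrow.mk a)
        (u := initial.to X) (v := 𝟙 X₀) (by apply Limits.initial.hom_ext))
      (𝟙 X) := by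
  constructor
  · constructor
    · apply Limits.initial.hom_ext
    · exact (Category.id_comp a).trans (Category.comp_id a).symm
  · intro D h φ hφ
    obtain ⟨h1, h2⟩ := hφ
    simp only [Gam_obj, Arrow.mk_hom, Functor.id_obj, Arrow.mk_left, Arrow.mk_right,
      Arrow.comp_right, Gam_map] at h1 h2 ⊢
    refine ⟨Arrow.homMk (u := φ) (v := h.right) ?_, ⟨?_, ?_⟩, ?_⟩
    · exact h2
    · apply CommaMorphism.ext
      · apply Limits.initial.hom_ext
      · exact Category.id_comp _
    · simp [thetaDelta]; exact Category.id_comp φ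
    · intro h' ⟨hc, hγ⟩
      apply CommaMorphism.ext
      · simp [thetaDelta] at hγ; exact (Category.id_comp _).symm.trans hγ
      · have := congrArg CommaMorphism.right hc
        exact (Category.id_comp _).symm.trans this
end

section
/- If 𝒜 has pushouts, then for any arrow (f, f₀) : (A, a, A₀) → (B, b, B₀) in Arr(𝒜), the object (A₀ +_{a,f} B, [f₀, b], B₀) — with A₀ +_{a,f} B the pushout of a and f, first component the arrow a' : B → A₀ +_{a,f} B, second component id_{B₀}, and structural diagonal f' : A₀ → A₀ +_{a,f} B — together with the map ((a', id_{B₀})) and the nullhomotopy f' is a strong Θ_Δ-cokernel of (f, f₀) in (Arr(𝒜), Θ_Δ). -/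
open CategoryTheory Limits

universe v u v' u'

/-- if `𝒜` has pushouts, the `Θ_Δ`-cokernel of `(f, f₀)` is
`(A₀ +_{a,f} B, [f₀, b], B₀)` with the map `(a', id)` and the nullhomotopy given by
the pushout coprojection `f'`, and it is a strong `Θ_Δ`-cokernel. -/
theorem stmt12 (A : Type u) [Category.{v} A] [HasPushouts A] {X Y : Arrow A} (m : X ⟶ Y) :
    IsStrongThetaCokernel (thetaDelta A) m
      (Arrow.homMk (f := Y) (g := Arrow.mk (pushout.desc m.right Y.hom m.w.symm))
        (u := pushout.inr X.hom m.left) (v := 𝟙 Y.right) (by simp; exact pushout.inr_desc _ _ _))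
      (pushout.inl X.hom m.left) := by
  constructor
  · constructor
    · constructor
      · exact pushout.condition
      · simp
        exact pushout.inl_desc _ _ _
    · intro D h φ hφ
      obtain ⟨h1, h2⟩ := hφ
      have h1' : X.hom ≫ φ = m.left ≫ h.left := h1
      refine ⟨Arrow.homMk (u := pushout.desc φ h.left h1')
        (v := h.right) ?_, ⟨?_, ?_⟩, ?_⟩
      · apply pushout.hom_ext
        · simp only [Arrow.mk_hom, pushout.inl_desc_assoc, pushout.inl_desc]
          have : φ ≫ D.hom = m.right ≫ h.right := h2
          exact (pushout.inl_desc_assoc _ _ _ _).trans this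
        · simp
          exact (pushout.inr_desc_assoc _ _ _ _).trans ((Arrow.w h).trans (pushout.inr_desc_assoc _ _ _ _).symm)
      · apply CommaMorphism.ext
        · simp
          exact pushout.inr_desc _ _ _
        · simp
      · show CommaMorphism.right (𝟙 X) ≫ pushout.inl X.hom m.left ≫ _ = φ
        simp
        exact pushout.inl_desc _ _ _
      · intro h' ⟨hc, hγ⟩
        apply CommaMorphism.ext
        · apply pushout.hom_ext
          · have hγ' : CommaMorphism.right (𝟙 X) ≫ pushout.inl X.hom m.left ≫ h'.left = φ := hγ
            simp at hγ'
            exact hγ'.trans (pushout.inl_desc _ _ _).symm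
          · have hc' := congrArg CommaMorphism.left hc
            simp at hc'
            exact hc'.trans (pushout.inr_desc _ _ _).symm
        · simpa using congrArg CommaMorphism.right hc
  · intro D h φ hφ heq
    obtain ⟨h1, h2⟩ := hφ
    have h1' : Y.hom ≫ φ = pushout.inr X.hom m.left ≫ h.left := h1
    have heq' : m.right ≫ φ = pushout.inl X.hom m.left ≫ h.left := by
      have heq2 : CommaMorphism.right m ≫ φ ≫ CommaMorphism.left (𝟙 D) =
          CommaMorphism.right (𝟙 X) ≫ pushout.inl X.hom m.left ≫ h.left := heq
      simp at heq2
      erw [Category.comp_id] at heq2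
      exact heq2
    refine ⟨φ, ⟨⟨?_, ?_⟩, ?_⟩, ?_⟩
    · show pushout.desc m.right Y.hom _ ≫ φ = h.left
      apply pushout.hom_ext
      · exact (pushout.inl_desc_assoc _ _ _ _).trans heq'
      · exact (pushout.inr_desc_assoc _ _ _ _).trans h1'
    · simpa using h2
    · show 𝟙 Y.right ≫ φ ≫ 𝟙 D.left = φ
      simp
      exact Category.comp_id _
    · intro φ'' ⟨_, hc⟩
      have h3 : 𝟙 Y.right ≫ φ'' ≫ 𝟙 D.left = φ := hc
      simp at h3
      exact (Category.comp_id _).symm.trans h3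
end

section
/- If 𝒜 has pushouts, then pushouts in Arr(𝒜) (computed levelwise) are Θ_Δ-strong: given a pushout square in Arr(𝒜) with coprojections (g', g₀') and (f', f₀'), a cocone (x, x₀), (y, y₀) into (D, d, D₀) with induced map ([x,y], [x₀,y₀]), and nullhomotopies φ ∈ Θ_Δ(x, x₀), ψ ∈ Θ_Δ(y, y₀) with (f,f₀) ∘ φ = (g,g₀) ∘ ψ, there is a unique nullhomotopy [φ,ψ] ∈ Θ_Δ([x,y],[x₀,y₀]) with (g',g₀') ∘ [φ,ψ] = φ and (f',f₀') ∘ [φ,ψ] = ψ. -/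
open CategoryTheory Limits

universe v u v' u'

section AuxStmt14
variable {A : Type u} [Category.{v} A]

lemma arrowLeftFuncPreserves {J : Type*} [Category J] (F : J ⥤ Arrow A)
    [HasColimit (F ⋙ Comma.fst (𝟭 A) (𝟭 A))] [HasColimit (F ⋙ Comma.snd (𝟭 A) (𝟭 A))] :
    PreservesColimit F (Comma.fst (𝟭 A) (𝟭 A)) :=
  preservesColimit_of_preserves_colimit_cocone
    (Comma.coconeOfPreservesIsColimit (L := 𝟭 A) (R := 𝟭 A) F (colimit.isColimit (F ⋙ Comma.fst (𝟭 A) (𝟭 A))) (colimit.isColimit (F ⋙ Comma.snd (𝟭 A) (𝟭 A))))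
    (IsColimit.ofIsoColimit (colimit.isColimit (F ⋙ Comma.fst (𝟭 A) (𝟭 A)))
      (Cocones.ext (Iso.refl _) (by intro j; exact Category.comp_id _)))

lemma arrowRightFuncPreserves {J : Type*} [Category J] (F : J ⥤ Arrow A)
    [HasColimit (F ⋙ Comma.fst (𝟭 A) (𝟭 A))] [HasColimit (F ⋙ Comma.snd (𝟭 A) (𝟭 A))] :
    PreservesColimit F (Comma.snd (𝟭 A) (𝟭 A)) :=
  preservesColimit_of_preserves_colimit_cocone
    (Comma.coconeOfPreservesIsColimit (L := 𝟭 A) (R := 𝟭 A) F (colimit.isColimit (F ⋙ Comma.fst (𝟭 A) (𝟭 A))) (colimit.isColimit (F ⋙ Comma.snd (𝟭 A) (𝟭 A))))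
    (IsColimit.ofIsoColimit (colimit.isColimit (F ⋙ Comma.snd (𝟭 A) (𝟭 A)))
      (Cocones.ext (Iso.refl _) (by intro j; exact Category.comp_id _)))

end AuxStmt14

/-- if `𝒜` has pushouts, the pushouts in `Arr(𝒜)` are `Θ_Δ`-strong. -/
theorem stmt14 (A : Type u) [Category.{v} A] [HasPushouts A] :
    ∀ {Z X Y P : Arrow A} (f : Z ⟶ X) (g : Z ⟶ Y) (h : X ⟶ P) (i : Y ⟶ P),
      IsPushout f g h i → PushoutThetaStrong (thetaDelta A) f g h i := by
  intro Z X Y P f g h i hpo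
  haveI : HasColimit (span f g ⋙ Comma.fst (𝟭 A) (𝟭 A)) := inferInstance
  haveI : HasColimit (span f g ⋙ Comma.snd (𝟭 A) (𝟭 A)) := inferInstance
  haveI := arrowLeftFuncPreserves (span f g)
  haveI := arrowRightFuncPreserves (span f g)
  have hL : IsPushout f.left g.left h.left i.left := hpo.map (Comma.fst (𝟭 A) (𝟭 A))
  have hR : IsPushout f.right g.right h.right i.right := hpo.map (Comma.snd (𝟭 A) (𝟭 A))
  intro D x y z hxz hyz φ ψ hφ hψ hc
  change X.right ⟶ D.left at φ
  change Y.right ⟶ D.left at ψ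
  obtain ⟨hφ1, hφ2⟩ := hφ
  obtain ⟨hψ1, hψ2⟩ := hψ
  have hc' : f.right ≫ φ = g.right ≫ ψ := by
    simpa [thetaDelta] using hc
  have hxz1 : h.left ≫ z.left = x.left := congrArg CommaMorphism.left hxz
  have hxz2 : h.right ≫ z.right = x.right := congrArg CommaMorphism.right hxz
  have hyz1 : i.left ≫ z.left = y.left := congrArg CommaMorphism.left hyz
  have hyz2 : i.right ≫ z.right = y.right := congrArg CommaMorphism.right hyz
  refine ⟨hR.desc φ ψ hc', ⟨⟨?_, ?_⟩, ?_, ?_⟩, ?_⟩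
  · apply hL.hom_ext
    · rw [← Category.assoc, Arrow.w h, Category.assoc, hR.inl_desc, hφ1, ← hxz1]
    · rw [← Category.assoc, Arrow.w i, Category.assoc, hR.inr_desc, hψ1, ← hyz1]
  · apply hR.hom_ext
    · rw [← Category.assoc, hR.inl_desc, hφ2, ← hxz2]
    · rw [← Category.assoc, hR.inr_desc, hψ2, ← hyz2]
  · show h.right ≫ hR.desc φ ψ hc' ≫ (𝟙 D : D ⟶ D).left = φ
    simp [hR.inl_desc]
  · show i.right ≫ hR.desc φ ψ hc' ≫ (𝟙 D : D ⟶ D).left = ψ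
    simp [hR.inr_desc]
  · rintro χ ⟨-, hχ1, hχ2⟩
    change P.right ⟶ D.left at χ
    apply hR.hom_ext
    · rw [hR.inl_desc, ← hχ1]; simp [thetaDelta]
    · rw [hR.inr_desc, ← hχ2]; simp [thetaDelta]
end

section
/- Let 𝒜 have finite colimits, let (ℬ, Θ) satisfy the reduced interchange, and let ℱ : 𝒜 → ℬ be a functor sending finite colimits to Θ-strong finite colimits and such that ℱ g has a strong Θ-cokernel in ℬ for every arrow g of 𝒜. Then the functor F̂ : Arr(𝒜) → ℬ defined by F̂(A, a, A₀) := 𝒞(ℱ a) (a chosen strong Θ-cokernel of ℱ a), on arrows by the unique induced map between Θ-cokernels, and on nullhomotopies by the unique induced nullhomotopy, is a morphism of categories with nullhomotopies (Arr(𝒜), Θ_Δ) → (ℬ, Θ) satisfying Γ · F̂ ≅ ℱ. -/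
open CategoryTheory Limits

universe v u v' u'

/-- A morphism of categories with nullhomotopies. -/
structure NullMor {A : Type u} {B : Type u'} [Category.{v} A] [Category.{v'} B]
    (M : NullStruct A) (N : NullStruct B) where
  F : A ⥤ B
  mapN : ∀ {X Y : A} (g : X ⟶ Y), M.theta g → N.E (F.obj X) (F.obj Y)
  mapN_mem : ∀ {X Y : A} (g : X ⟶ Y) (φ : M.theta g), mapN g φ ∈ N.theta (F.map g)
  mapN_comp : ∀ {W X Y Z : A} (f : W ⟶ X) (g : X ⟶ Y) (h : Y ⟶ Z) (φ : M.theta g),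
    mapN (f ≫ g ≫ h) ⟨M.comp f h φ.1, M.comp_mem f h φ.2⟩
      = N.comp (F.map f) (F.map h) (mapN g φ)


namespace Stmt16Aux

variable {A : Type u} [Category.{v} A] {B : Type u'} [Category.{v'} B]
  {N : NullStruct B} {F : A ⥤ B}
  {Q : Arrow A → B} {c : ∀ X : Arrow A, F.obj X.right ⟶ Q X}
  {γ : ∀ X : Arrow A, N.E (F.obj X.left) (Q X)}

/-- Composing nullhomotopies twice. -/
theorem compc {A2 A1 X Y D1 D2 : B} (f₂ : A2 ⟶ A1) (f₁ : A1 ⟶ X) (h₁ : Y ⟶ D1)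
    (h₂ : D1 ⟶ D2) {g : X ⟶ Y} {φ : N.E X Y} (hφ : φ ∈ N.theta g) :
    N.comp f₂ h₂ (N.comp f₁ h₁ φ) = N.comp (f₂ ≫ f₁) (h₁ ≫ h₂) φ :=
  (N.comp_comp f₂ f₁ h₁ h₂ hφ).symm

/-- Extensionality for morphisms out of a Θ-cokernel. -/
theorem cok_ext {X Y Qb D : B} {g : X ⟶ Y} {cc : Y ⟶ Qb} {gg : N.E X Qb}
    (hc : IsThetaCokernel N g cc gg) {k₁ k₂ : Qb ⟶ D}
    (h1 : cc ≫ k₁ = cc ≫ k₂) (h2 : N.comp (𝟙 X) k₁ gg = N.comp (𝟙 X) k₂ gg) :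
    k₁ = k₂ := by
  have m : N.comp (𝟙 X) k₁ gg ∈ N.theta (g ≫ cc ≫ k₁) := by
    have := N.comp_mem (𝟙 X) k₁ hc.mem
    simpa using this
  obtain ⟨h', -, uniq⟩ := hc.factor (cc ≫ k₁) _ m
  rw [uniq k₁ ⟨rfl, rfl⟩, uniq k₂ ⟨h1.symm, h2.symm⟩]

section
variable (hQ : ∀ X : Arrow A, IsStrongThetaCokernel N (F.map X.hom) (c X) (γ X))
include hQ

theorem phi_mem {X Y : Arrow A} (f : X ⟶ Y) :
    N.comp (F.map f.left) (𝟙 (Q Y)) (γ Y)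
      ∈ N.theta (F.map X.hom ≫ F.map f.right ≫ c Y) := by
  have h := N.comp_mem (F.map f.left) (𝟙 (Q Y)) (hQ Y).mem
  simp only [Category.comp_id] at h
  have e : F.map f.left ≫ F.map Y.hom ≫ c Y = F.map X.hom ≫ F.map f.right ≫ c Y := by
    rw [← Category.assoc, ← Category.assoc, ← F.map_comp, ← F.map_comp, Arrow.w]
  rwa [e] at h

/-- The action of the extended functor on morphisms. -/
noncomputable def extHom {X Y : Arrow A} (f : X ⟶ Y) : Q X ⟶ Q Y :=
  ((hQ X).factor (F.map f.right ≫ c Y) _ (phi_mem hQ f)).choose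

theorem extHom_comm {X Y : Arrow A} (f : X ⟶ Y) :
    c X ≫ extHom hQ f = F.map f.right ≫ c Y :=
  ((hQ X).factor (F.map f.right ≫ c Y) _ (phi_mem hQ f)).choose_spec.1.1

theorem extHom_gamma {X Y : Arrow A} (f : X ⟶ Y) :
    N.comp (𝟙 (F.obj X.left)) (extHom hQ f) (γ X)
      = N.comp (F.map f.left) (𝟙 (Q Y)) (γ Y) :=
  ((hQ X).factor (F.map f.right ≫ c Y) _ (phi_mem hQ f)).choose_spec.1.2

theorem extHom_unique {X Y : Arrow A} (f : X ⟶ Y) (k : Q X ⟶ Q Y)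
    (h1 : c X ≫ k = F.map f.right ≫ c Y)
    (h2 : N.comp (𝟙 (F.obj X.left)) k (γ X) = N.comp (F.map f.left) (𝟙 (Q Y)) (γ Y)) :
    k = extHom hQ f :=
  ((hQ X).factor (F.map f.right ≫ c Y) _ (phi_mem hQ f)).choose_spec.2 k ⟨h1, h2⟩

theorem extHom_id (X : Arrow A) : extHom hQ (𝟙 X) = 𝟙 (Q X) := by
  refine (extHom_unique hQ (𝟙 X) (𝟙 (Q X)) ?_ ?_).symm
  · show c X ≫ 𝟙 (Q X) = F.map (𝟙 X.right) ≫ c X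
    simp
  · show N.comp (𝟙 (F.obj X.left)) (𝟙 (Q X)) (γ X)
      = N.comp (F.map (𝟙 X.left)) (𝟙 (Q X)) (γ X)
    rw [F.map_id]

theorem extHom_comp {X Y Z : Arrow A} (f : X ⟶ Y) (g : Y ⟶ Z) :
    extHom hQ (f ≫ g) = extHom hQ f ≫ extHom hQ g := by
  refine (extHom_unique hQ (f ≫ g) _ ?_ ?_).symm
  · show c X ≫ extHom hQ f ≫ extHom hQ g = F.map (f.right ≫ g.right) ≫ c Z
    rw [← Category.assoc, extHom_comm hQ f, Category.assoc, extHom_comm hQ g,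
      F.map_comp, Category.assoc]
  · show N.comp (𝟙 (F.obj X.left)) (extHom hQ f ≫ extHom hQ g) (γ X)
      = N.comp (F.map (f.left ≫ g.left)) (𝟙 (Q Z)) (γ Z)
    have e1 : N.comp (𝟙 (F.obj X.left)) (extHom hQ g)
        (N.comp (𝟙 (F.obj X.left)) (extHom hQ f) (γ X))
        = N.comp (𝟙 (F.obj X.left) ≫ 𝟙 (F.obj X.left)) (extHom hQ f ≫ extHom hQ g)
          (γ X) := compc _ _ _ _ (hQ X).mem
    simp only [Category.id_comp] at e1
    rw [← e1, extHom_gamma hQ f]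
    have e2 : N.comp (𝟙 (F.obj X.left)) (extHom hQ g)
        (N.comp (F.map f.left) (𝟙 (Q Y)) (γ Y))
        = N.comp (𝟙 (F.obj X.left) ≫ F.map f.left) (𝟙 (Q Y) ≫ extHom hQ g) (γ Y) :=
      compc _ _ _ _ (hQ Y).mem
    have e3 : N.comp (F.map f.left) (𝟙 (Q Z))
        (N.comp (𝟙 (F.obj Y.left)) (extHom hQ g) (γ Y))
        = N.comp (F.map f.left ≫ 𝟙 (F.obj Y.left)) (extHom hQ g ≫ 𝟙 (Q Z)) (γ Y) :=
      compc _ _ _ _ (hQ Y).mem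
    simp only [Category.id_comp, Category.comp_id] at e2 e3
    rw [e2, ← e3, extHom_gamma hQ g]
    have e4 : N.comp (F.map f.left) (𝟙 (Q Z))
        (N.comp (F.map g.left) (𝟙 (Q Z)) (γ Z))
        = N.comp (F.map f.left ≫ F.map g.left) (𝟙 (Q Z) ≫ 𝟙 (Q Z)) (γ Z) :=
      compc _ _ _ _ (hQ Z).mem
    rw [e4, F.map_comp, Category.comp_id]

/-- The extended functor `F̂`. -/
noncomputable def extF : Arrow A ⥤ B where
  obj := Q
  map f := extHom hQ f
  map_id X := extHom_id hQ X
  map_comp f g := extHom_comp hQ f g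

theorem psi_mem {X Y : Arrow A} (g : X ⟶ Y) (φ : (thetaDelta A).theta g) :
    N.comp (F.map φ.1) (𝟙 (Q Y)) (γ Y) ∈ N.theta (c X ≫ extHom hQ g) := by
  have h := N.comp_mem (F.map φ.1) (𝟙 (Q Y)) (hQ Y).mem
  simp only [Category.comp_id] at h
  have e : F.map φ.1 ≫ F.map Y.hom ≫ c Y = c X ≫ extHom hQ g := by
    rw [extHom_comm hQ g, ← Category.assoc, ← F.map_comp (φ.1 : X.right ⟶ Y.left) Y.hom]
    have : φ.1 ≫ Y.hom = g.right := φ.2.2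
    rw [this]
  rwa [e] at h

theorem psi_cond {X Y : Arrow A} (g : X ⟶ Y) (φ : (thetaDelta A).theta g) :
    N.comp (F.map X.hom) (𝟙 (Q Y)) (N.comp (F.map φ.1) (𝟙 (Q Y)) (γ Y))
      = N.comp (𝟙 (F.obj X.left)) (extHom hQ g) (γ X) := by
  rw [extHom_gamma hQ g]
  have e := compc (N := N) (F.map X.hom) (F.map φ.1) (𝟙 (Q Y)) (𝟙 (Q Y)) (hQ Y).mem
  rw [e, Category.comp_id, ← F.map_comp X.hom (φ.1 : X.right ⟶ Y.left)]
  have : X.hom ≫ φ.1 = g.left := φ.2.1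
  rw [this]

/-- The action of the extension on nullhomotopies. -/
noncomputable def extN {X Y : Arrow A} (g : X ⟶ Y) (φ : (thetaDelta A).theta g) :
    N.E (Q X) (Q Y) :=
  ((hQ X).strong (extHom hQ g) _ (psi_mem hQ g φ) (psi_cond hQ g φ)).choose

theorem extN_mem {X Y : Arrow A} (g : X ⟶ Y) (φ : (thetaDelta A).theta g) :
    extN hQ g φ ∈ N.theta (extHom hQ g) :=
  ((hQ X).strong (extHom hQ g) _ (psi_mem hQ g φ) (psi_cond hQ g φ)).choose_spec.1.1

theorem extN_c {X Y : Arrow A} (g : X ⟶ Y) (φ : (thetaDelta A).theta g) :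
    N.comp (c X) (𝟙 (Q Y)) (extN hQ g φ) = N.comp (F.map φ.1) (𝟙 (Q Y)) (γ Y) :=
  ((hQ X).strong (extHom hQ g) _ (psi_mem hQ g φ) (psi_cond hQ g φ)).choose_spec.1.2

theorem extN_unique {X Y : Arrow A} (g : X ⟶ Y) (φ : (thetaDelta A).theta g)
    (ψ : N.E (Q X) (Q Y)) (h1 : ψ ∈ N.theta (extHom hQ g))
    (h2 : N.comp (c X) (𝟙 (Q Y)) ψ = N.comp (F.map φ.1) (𝟙 (Q Y)) (γ Y)) :
    ψ = extN hQ g φ :=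
  ((hQ X).strong (extHom hQ g) _ (psi_mem hQ g φ) (psi_cond hQ g φ)).choose_spec.2
    ψ ⟨h1, h2⟩

theorem extN_comp {W X Y Z : Arrow A} (f : W ⟶ X) (g : X ⟶ Y) (h : Y ⟶ Z)
    (φ : (thetaDelta A).theta g) :
    extN hQ (f ≫ g ≫ h)
      ⟨(thetaDelta A).comp f h φ.1, (thetaDelta A).comp_mem f h φ.2⟩
      = N.comp (extHom hQ f) (extHom hQ h) (extN hQ g φ) := by
  have m1 : extN hQ g φ ∈ N.theta (extHom hQ g) := extN_mem hQ g φ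
  refine (extN_unique hQ (f ≫ g ≫ h) _ _ ?_ ?_).symm
  · have := N.comp_mem (extHom hQ f) (extHom hQ h) m1
    rwa [← extHom_comp hQ g h, ← extHom_comp hQ f (g ≫ h)] at this
  · show N.comp (c W) (𝟙 (Q Z)) (N.comp (extHom hQ f) (extHom hQ h) (extN hQ g φ))
      = N.comp (F.map (f.right ≫ φ.1 ≫ h.left)) (𝟙 (Q Z)) (γ Z)
    have s1 := compc (N := N) (c W) (extHom hQ f) (extHom hQ h) (𝟙 (Q Z)) m1
    rw [s1, Category.comp_id, extHom_comm hQ f]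
    have s2 := compc (N := N) (F.map f.right) (c X) (𝟙 (Q Y)) (extHom hQ h) m1
    simp only [Category.id_comp] at s2
    rw [← s2, extN_c hQ g φ]
    have s3 := compc (N := N) (F.map f.right) (F.map φ.1) (𝟙 (Q Y)) (extHom hQ h)
      (hQ Y).mem
    simp only [Category.id_comp] at s3
    rw [s3]
    have s4 := compc (N := N) (F.map f.right ≫ F.map φ.1) (𝟙 (F.obj Y.left))
      (extHom hQ h) (𝟙 (Q Z)) (hQ Y).mem
    simp only [Category.comp_id] at s4
    rw [← s4, extHom_gamma hQ h]
    have s5 := compc (N := N) (F.map f.right ≫ F.map φ.1) (F.map h.left) (𝟙 (Q Z))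
      (𝟙 (Q Z)) (hQ Z).mem
    rw [s5, Category.comp_id, Category.assoc, ← F.map_comp (φ.1 : X.right ⟶ Y.left) h.left,
      ← F.map_comp f.right]

/-- The extension as a morphism of categories with nullhomotopies. -/
noncomputable def extMor : NullMor (thetaDelta A) N where
  F := extF hQ
  mapN g φ := extN hQ g φ
  mapN_mem g φ := extN_mem hQ g φ
  mapN_comp f g h φ := extN_comp hQ f g h φ

section Iso
variable [HasInitial A]
  (hinit : ∀ (Z : B) (t : F.obj (⊥_ A) ⟶ Z), ∃! γ₀ : N.E (F.obj (⊥_ A)) Z, γ₀ ∈ N.theta t)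

omit hQ in
/-- The unique nullhomotopy on `F (initial.to X)`. -/
noncomputable def gam0 (X : A) : N.E (F.obj (⊥_ A)) (F.obj X) :=
  (hinit (F.obj X) (F.map (initial.to X))).choose

omit hQ in
theorem gam0_mem (X : A) : gam0 hinit X ∈ N.theta (F.map (initial.to X)) :=
  (hinit (F.obj X) (F.map (initial.to X))).choose_spec.1

omit hQ in
theorem gam0_mem' (X : A) :
    gam0 hinit X ∈ N.theta (F.map ((Gam A).obj X).hom
      ≫ 𝟙 (F.obj ((Gam A).obj X).right)) := by
  show gam0 hinit X ∈ N.theta (F.map (initial.to X) ≫ 𝟙 (F.obj X))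
  rw [Category.comp_id]
  exact gam0_mem hinit X

/-- The comparison morphism from the chosen Θ-cokernel of `F (initial.to X)` to `F X`. -/
noncomputable def uComp (X : A) : Q ((Gam A).obj X) ⟶ F.obj ((Gam A).obj X).right :=
  ((hQ ((Gam A).obj X)).factor (𝟙 (F.obj ((Gam A).obj X).right)) (gam0 hinit X)
    (gam0_mem' hinit X)).choose

theorem uComp_comm (X : A) :
    c ((Gam A).obj X) ≫ uComp hQ hinit X = 𝟙 (F.obj ((Gam A).obj X).right) :=
  ((hQ ((Gam A).obj X)).factor (𝟙 (F.obj ((Gam A).obj X).right)) (gam0 hinit X)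
    (gam0_mem' hinit X)).choose_spec.1.1

theorem uComp_gamma (X : A) :
    N.comp (𝟙 (F.obj ((Gam A).obj X).left)) (uComp hQ hinit X) (γ ((Gam A).obj X))
      = gam0 hinit X :=
  ((hQ ((Gam A).obj X)).factor (𝟙 (F.obj ((Gam A).obj X).right)) (gam0 hinit X)
    (gam0_mem' hinit X)).choose_spec.1.2

theorem uComp_inv (X : A) :
    uComp hQ hinit X ≫ c ((Gam A).obj X) = 𝟙 (Q ((Gam A).obj X)) := by
  apply cok_ext (hQ ((Gam A).obj X)).toIsThetaCokernel
  · rw [← Category.assoc, uComp_comm hQ hinit X]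
    exact (Category.id_comp _).trans (Category.comp_id _).symm
  · have m1 : N.comp (𝟙 (F.obj ((Gam A).obj X).left))
        (uComp hQ hinit X ≫ c ((Gam A).obj X)) (γ ((Gam A).obj X))
        ∈ N.theta (F.map ((Gam A).obj X).hom ≫ c ((Gam A).obj X)) := by
      have := N.comp_mem (𝟙 (F.obj ((Gam A).obj X).left))
        (uComp hQ hinit X ≫ c ((Gam A).obj X)) (hQ ((Gam A).obj X)).mem
      simp only [Category.id_comp, Category.assoc] at this
      rwa [← Category.assoc (c ((Gam A).obj X)), uComp_comm hQ hinit X,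
        Category.id_comp] at this
    have m2 : N.comp (𝟙 (F.obj ((Gam A).obj X).left)) (𝟙 (Q ((Gam A).obj X)))
        (γ ((Gam A).obj X))
        ∈ N.theta (F.map ((Gam A).obj X).hom ≫ c ((Gam A).obj X)) := by
      have e : N.comp (𝟙 (F.obj ((Gam A).obj X).left)) (𝟙 (Q ((Gam A).obj X)))
          (γ ((Gam A).obj X)) = γ ((Gam A).obj X) :=
        N.id_comp (hQ ((Gam A).obj X)).mem
      rw [e]
      exact (hQ ((Gam A).obj X)).mem
    exact (hinit (Q ((Gam A).obj X))
      (F.map ((Gam A).obj X).hom ≫ c ((Gam A).obj X))).unique m1 m2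

/-- The natural isomorphism `Γ ⋙ F̂ ≅ F`. -/
noncomputable def extIso : Gam A ⋙ extF hQ ≅ F := by
  refine NatIso.ofComponents
    (fun X => ⟨uComp hQ hinit X, c ((Gam A).obj X),
      uComp_inv hQ hinit X, uComp_comm hQ hinit X⟩) ?_
  intro X Y g
  show extHom hQ ((Gam A).map g) ≫ uComp hQ hinit Y
      = uComp hQ hinit X ≫ F.map ((Gam A).map g).right
  have hc1 : c ((Gam A).obj X) ≫ extHom hQ ((Gam A).map g) ≫ uComp hQ hinit Y
      = F.map ((Gam A).map g).right := by
    rw [← Category.assoc, extHom_comm hQ ((Gam A).map g), Category.assoc,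
      uComp_comm hQ hinit Y, Category.comp_id]
  have hc2 : c ((Gam A).obj X) ≫ uComp hQ hinit X ≫ F.map ((Gam A).map g).right
      = F.map ((Gam A).map g).right := by
    rw [← Category.assoc, uComp_comm hQ hinit X, Category.id_comp]
  apply cok_ext (hQ ((Gam A).obj X)).toIsThetaCokernel
  · rw [hc1, hc2]
  · have m1 : N.comp (𝟙 (F.obj ((Gam A).obj X).left))
        (extHom hQ ((Gam A).map g) ≫ uComp hQ hinit Y) (γ ((Gam A).obj X))
        ∈ N.theta (F.map ((Gam A).obj X).hom ≫ F.map ((Gam A).map g).right) := by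
      have := N.comp_mem (𝟙 (F.obj ((Gam A).obj X).left))
        (extHom hQ ((Gam A).map g) ≫ uComp hQ hinit Y) (hQ ((Gam A).obj X)).mem
      simp only [Functor.id_obj, Category.id_comp, Category.assoc] at this
      rwa [hc1] at this
    have m2 : N.comp (𝟙 (F.obj ((Gam A).obj X).left))
        (uComp hQ hinit X ≫ F.map ((Gam A).map g).right) (γ ((Gam A).obj X))
        ∈ N.theta (F.map ((Gam A).obj X).hom ≫ F.map ((Gam A).map g).right) := by
      have := N.comp_mem (𝟙 (F.obj ((Gam A).obj X).left))
        (uComp hQ hinit X ≫ F.map ((Gam A).map g).right) (hQ ((Gam A).obj X)).mem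
      simp only [Functor.id_obj, Category.id_comp, Category.assoc] at this
      rwa [hc2] at this
    exact (hinit (F.obj ((Gam A).obj Y).right)
      (F.map ((Gam A).obj X).hom ≫ F.map ((Gam A).map g).right)).unique m1 m2

end Iso
end
end Stmt16Aux

/-- existence of the extension `F̂ : Arr(𝒜) → ℬ` of a functor
`ℱ : 𝒜 → ℬ` sending finite colimits to `Θ`-strong finite colimits and whose images
of arrows have strong `Θ`-cokernels: `F̂` is a morphism of categories with
nullhomotopies, its value at `(A, a, A₀)` is a strong `Θ`-cokernel of `ℱ a`, and
`Γ · F̂ ≅ ℱ`. -/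
theorem stmt16 (A : Type u) [Category.{v} A] [HasFiniteColimits A]
    {B : Type u'} [Category.{v'} B] (N : NullStruct B) (hri : ReducedInterchange N)
    (F : A ⥤ B) [PreservesFiniteColimits F]
    (hinit : ∀ (X : B) (t : F.obj (⊥_ A) ⟶ X), ∃! γ : N.E (F.obj (⊥_ A)) X, γ ∈ N.theta t)
    (hpo : ∀ {Z X Y P : A} (f : Z ⟶ X) (g : Z ⟶ Y) (h : X ⟶ P) (i : Y ⟶ P),
      IsPushout f g h i → PushoutThetaStrong N (F.map f) (F.map g) (F.map h) (F.map i))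
    (hcok : ∀ {X Y : A} (g : X ⟶ Y), ∃ (Q : B) (c : F.obj Y ⟶ Q) (γ : N.E (F.obj X) Q),
      IsStrongThetaCokernel N (F.map g) c γ) :
    ∃ Fh : NullMor (thetaDelta A) N,
      (∀ X : Arrow A, ∃ (c : F.obj X.right ⟶ Fh.F.obj X) (γ : N.E (F.obj X.left) (Fh.F.obj X)),
        IsStrongThetaCokernel N (F.map X.hom) c γ) ∧
      Nonempty (Gam A ⋙ Fh.F ≅ F) := by
  classical
  choose Q c γ hQ using fun X : Arrow A => hcok X.hom
  exact ⟨Stmt16Aux.extMor hQ, fun X => ⟨c X, γ X, hQ X⟩, ⟨Stmt16Aux.extIso hQ hinit⟩⟩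
end

section
/- Let 𝒜 be an additive category and a : A → A₀ an arrow. Then the reflexive graph with object of objects A₀, object of arrows A₀ ⊕ A, domain map the projection π₁ : A₀ ⊕ A → A₀, codomain map [id; a] : A₀ ⊕ A → A₀ (acting as identity on A₀ and as a on A), and reflexivity i₁ : A₀ → A₀ ⊕ A, admits a unique internal category composition, and this composition is id ⊕ ∇ : A₀ ⊕ A ⊕ A → A₀ ⊕ A where ∇ is the codiagonal of A. -/
/-!
Unitality alone determines the composition `m : (A₀ ⊞ A) ⊞ A ⟶ A₀ ⊞ A`: a map out of a biproduct
is fixed by its restrictions to the summands, the left unit law says `m` is the identity on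
`A₀ ⊞ A`, and the right unit law `map inl (𝟙 A) ≫ m = 𝟙`, restricted to the last `A`, says that
`m` is the inclusion there. So `m = desc 𝟙 inr`, which is `id ⊕ ∇`, and this map satisfies the
remaining laws by a componentwise computation.
-/

open CategoryTheory Limits

universe v u v' u'

namespace CategoryTheory.Limits.biprod

variable {C : Type u} [Category.{v} C]

section HasZeroMorphisms

variable [HasZeroMorphisms C] [HasBinaryBiproducts C]

theorem lift_fst_comp_snd_eq_map {X Y Z : C} (f : X ⟶ Z) :
    biprod.lift (biprod.fst ≫ f) biprod.snd = biprod.map f (𝟙 Y) := by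
  ext <;> simp

theorem eq_desc_id_inr_of_unital {X Y : C} (m : (X ⊞ Y) ⊞ Y ⟶ X ⊞ Y)
    (hl : biprod.inl ≫ m = 𝟙 _) (hr : biprod.map biprod.inl (𝟙 Y) ≫ m = 𝟙 _) :
    m = biprod.desc (𝟙 _) biprod.inr := by
  have hinr : biprod.inr ≫ m = biprod.inr :=
    calc biprod.inr ≫ m = biprod.inr ≫ biprod.map biprod.inl (𝟙 Y) ≫ m := by
          rw [biprod.inr_map_assoc, Category.id_comp]
      _ = biprod.inr := by rw [hr, Category.comp_id]
  exact biprod.hom_ext' _ _ (by rw [hl, biprod.inl_desc]) (by rw [hinr, biprod.inr_desc])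

theorem map_inl_id_comp_desc_id_inr (X Y : C) :
    biprod.map (biprod.inl : X ⟶ X ⊞ Y) (𝟙 Y) ≫ biprod.desc (𝟙 _) biprod.inr = 𝟙 _ := by
  ext <;> simp

end HasZeroMorphisms

variable [Preadditive C] [HasBinaryBiproducts C]

theorem desc_id_inr_eq_lift (X Y : C) :
    biprod.desc (𝟙 (X ⊞ Y)) biprod.inr =
      biprod.lift (biprod.fst ≫ biprod.fst) (biprod.fst ≫ biprod.snd + biprod.snd) := by
  ext <;> simp

end CategoryTheory.Limits.biprod

/-- in an additive category, the reflexive graph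
`(A₀ ⊕ A, π₁, [id; a], i₁)` admits a unique internal category composition, and it
is `id ⊕ ∇`. A map `m` on the object of composable pairs `A₀ ⊕ A ⊕ A` is an
internal composition iff it is compatible with domain and codomain and unital,
iff `m = id ⊕ ∇`. -/
theorem stmt17 (C : Type u) [Category.{v} C] [Preadditive C] [HasBinaryBiproducts C]
    {A A₀ : C} (a : A ⟶ A₀) :
    ∀ m : (A₀ ⊞ A) ⊞ A ⟶ A₀ ⊞ A,
      (m ≫ biprod.fst = biprod.fst ≫ (biprod.fst : A₀ ⊞ A ⟶ A₀) ∧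
        m ≫ biprod.desc (𝟙 A₀) a =
          (biprod.lift (biprod.fst ≫ biprod.desc (𝟙 A₀) a) biprod.snd :
            (A₀ ⊞ A) ⊞ A ⟶ A₀ ⊞ A) ≫ biprod.desc (𝟙 A₀) a ∧
        (biprod.inl : A₀ ⊞ A ⟶ (A₀ ⊞ A) ⊞ A) ≫ m = 𝟙 (A₀ ⊞ A) ∧
        biprod.lift (biprod.fst ≫ (biprod.inl : A₀ ⟶ A₀ ⊞ A)) biprod.snd ≫ m = 𝟙 (A₀ ⊞ A))
      ↔ m = biprod.lift (biprod.fst ≫ biprod.fst)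
          (biprod.fst ≫ biprod.snd + biprod.snd) := by
  intro m
  rw [← biprod.desc_id_inr_eq_lift]
  constructor
  · rintro ⟨-, -, hl, hr⟩
    exact biprod.eq_desc_id_inr_of_unital m hl (by rwa [biprod.lift_fst_comp_snd_eq_map] at hr)
  · rintro rfl
    refine ⟨by ext <;> simp, by ext <;> simp, biprod.inl_desc _ _, ?_⟩
    rw [biprod.lift_fst_comp_snd_eq_map, biprod.map_inl_id_comp_desc_id_inr]
end
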